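/- FEF does not equal the convex roof of pure-state FEF: for ρ = (1/2)(|00⟩⟨00| + |11⟩⟨11|) in C²⊗C², F(ρ) = 1/2, yet every pure-state decomposition {p_i, |ψ_i⟩} of ρ satisfies Σ_i p_i F(|ψ_i⟩) ≥ 1/2, with strict inequality for every decomposition other than the eigendecomposition. -/

import Mathlib

open Matrix Complex BigOperators Finset

noncomputable section

/-- The maximally entangled state `|ψ⁺⟩ = (1/√d) ∑ₖ |kk⟩` on `ℂ^d ⊗ ℂ^d`. -/
def psiPlus (d : ℕ) : (Fin d × Fin d) → ℂ :=
  fun p => if p.1 = p.2 then ((1 / Real.sqrt d : ℝ) : ℂ) else 0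

/-- `U ⊗ I` acting on `ℂ^d ⊗ ℂ^d`. -/
def tensorI {d : ℕ} (U : Matrix (Fin d) (Fin d) ℂ) :
    Matrix (Fin d × Fin d) (Fin d × Fin d) ℂ :=
  fun p q => U p.1 q.1 * (if p.2 = q.2 then 1 else 0)

/-- The rank-one projector `|ψ⟩⟨ψ|`. -/
def outer {n : Type*} [Fintype n] (ψ : n → ℂ) : Matrix n n ℂ :=
  Matrix.vecMulVec ψ (star ψ)

/-- The fully entangled fraction
`F(ρ) = max_U ⟨ψ⁺| (U† ⊗ I) ρ (U ⊗ I) |ψ⁺⟩`. -/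
def fef (d : ℕ) (ρ : Matrix (Fin d × Fin d) (Fin d × Fin d) ℂ) : ℝ :=
  sSup { x : ℝ | ∃ U ∈ Matrix.unitaryGroup (Fin d) ℂ,
    x = (star (tensorI U *ᵥ psiPlus d) ⬝ᵥ (ρ *ᵥ (tensorI U *ᵥ psiPlus d))).re }

/-- `|00⟩` in `ℂ² ⊗ ℂ²`. -/
def ket00 : Fin 2 × Fin 2 → ℂ := fun p => if p = (0, 0) then 1 else 0

/-- `|11⟩` in `ℂ² ⊗ ℂ²`. -/
def ket11 : Fin 2 × Fin 2 → ℂ := fun p => if p = (1, 1) then 1 else 0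

/-!
Every state of a pure-state decomposition of `ρ = ½(|00⟩⟨00| + |11⟩⟨11|)` lies in
`span{|00⟩, |11⟩}`, because `ρ` has zero diagonal entries at `|01⟩` and `|10⟩`. For such a state
`α|00⟩ + β|11⟩` the diagonal phase unitary `diag(e^{i arg α}, e^{i arg β})` gives the overlap
`(|α| + |β|)² / 2 = ½ + |αβ|`, so the average FEF of the decomposition is at least
`½ + ∑ᵢ pᵢ |αᵢ βᵢ|`. For `ρ` itself the overlap is `(|U₀₀|² + |U₁₁|²) / 4 ≤ ½`, with equality
at `U = 1`.
-/

open ComplexConjugate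

lemma re_star_dotProduct_outer_mulVec {n : Type*} [Fintype n] (ψ v : n → ℂ) :
    (star v ⬝ᵥ (outer ψ *ᵥ v)).re = ‖star v ⬝ᵥ ψ‖ ^ 2 := by
  rw [outer, vecMulVec_mulVec, dotProduct_smul, op_smul_eq_mul, star_dotProduct ψ v,
    Complex.star_def, Complex.mul_conj', ← Complex.ofReal_pow, Complex.ofReal_re]

lemma diagonal_exp_mem_unitaryGroup {n : Type*} [Fintype n] [DecidableEq n] (θ : n → ℝ) :
    diagonal (fun k => Complex.exp (θ k * I)) ∈ unitaryGroup n ℂ := by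
  rw [mem_unitaryGroup_iff, star_eq_conjTranspose, diagonal_conjTranspose, diagonal_mul_diagonal,
    ← diagonal_one]
  congr 1
  funext k
  simp [← Complex.exp_conj, ← Complex.exp_add]

lemma conj_exp_arg_mul_I_mul_self (a : ℂ) : conj (Complex.exp (arg a * I)) * a = ‖a‖ := by
  nth_rw 2 [← Complex.norm_mul_exp_arg_mul_I a]
  rw [mul_left_comm, Complex.conj_mul', Complex.norm_exp_ofReal_mul_I]
  simp

lemma apply_eq_zero_of_sum_smul_outer_apply_eq_zero {ι n : Type*} [Fintype ι] [Fintype n]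
    {p : ι → ℝ} (hp : ∀ i, 0 ≤ p i) {ψ : ι → n → ℂ} {q : n}
    (hq : (∑ i, p i • outer (ψ i)) q q = 0) {i : ι} (hi : p i ≠ 0) : ψ i q = 0 := by
  have hdiag : (∑ i, p i • outer (ψ i)) q q = ((∑ i, p i * ‖ψ i q‖ ^ 2 : ℝ) : ℂ) := by
    simp [Matrix.sum_apply, outer, vecMulVec_apply, Complex.mul_conj', Complex.real_smul]
  rw [hdiag, Complex.ofReal_eq_zero,
    Finset.sum_eq_zero_iff_of_nonneg (fun j _ => mul_nonneg (hp j) (sq_nonneg _))] at hq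
  simpa [hi] using hq i (mem_univ i)

lemma add_sum_mul_le_sum_mul {ι : Type*} [Fintype ι] {p f g : ι → ℝ} {c : ℝ}
    (hp : ∀ i, 0 ≤ p i) (hsum : ∑ i, p i = 1) (h : ∀ i, p i ≠ 0 → c + g i ≤ f i) :
    c + ∑ i, p i * g i ≤ ∑ i, p i * f i := by
  calc c + ∑ i, p i * g i = ∑ i, p i * (c + g i) := by
        simp only [mul_add, sum_add_distrib, ← sum_mul, hsum, one_mul]
    _ ≤ ∑ i, p i * f i := by
      refine sum_le_sum fun i _ => ?_
      rcases eq_or_ne (p i) 0 with hi | hi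
      · simp [hi]
      · exact mul_le_mul_of_nonneg_left (h i hi) (hp i)

def fefAt (d : ℕ) (ρ : Matrix (Fin d × Fin d) (Fin d × Fin d) ℂ) (U : Matrix (Fin d) (Fin d) ℂ) :
    ℝ :=
  (star (tensorI U *ᵥ psiPlus d) ⬝ᵥ (ρ *ᵥ (tensorI U *ᵥ psiPlus d))).re

section fefAt

variable {d : ℕ}

lemma tensorI_mulVec_psiPlus (U : Matrix (Fin d) (Fin d) ℂ) (p : Fin d × Fin d) :
    (tensorI U *ᵥ psiPlus d) p = U p.1 p.2 / Real.sqrt d := by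
  simp [mulVec, tensorI, psiPlus, dotProduct, Fintype.sum_prod_type, div_eq_mul_inv]

lemma fefAt_outer (ψ : Fin d × Fin d → ℂ) (U : Matrix (Fin d) (Fin d) ℂ) :
    fefAt d (outer ψ) U = ‖∑ p, star (U p.1 p.2) * ψ p‖ ^ 2 / d := by
  rw [fefAt, re_star_dotProduct_outer_mulVec]
  simp only [dotProduct, Pi.star_apply, tensorI_mulVec_psiPlus, star_div₀, div_mul_eq_mul_div,
    ← Finset.sum_div, norm_div]
  simp [div_pow]

lemma fefAt_add (ρ σ : Matrix (Fin d × Fin d) (Fin d × Fin d) ℂ) (U : Matrix (Fin d) (Fin d) ℂ) :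
    fefAt d (ρ + σ) U = fefAt d ρ U + fefAt d σ U := by
  rw [fefAt, add_mulVec, dotProduct_add, Complex.add_re]
  rfl

lemma fefAt_smul (c : ℝ) (ρ : Matrix (Fin d × Fin d) (Fin d × Fin d) ℂ)
    (U : Matrix (Fin d) (Fin d) ℂ) : fefAt d (c • ρ) U = c * fefAt d ρ U := by
  rw [fefAt, smul_mulVec, dotProduct_smul, Complex.real_smul, Complex.re_ofReal_mul]
  rfl

lemma fef_le_of_forall_fefAt_le {ρ : Matrix (Fin d × Fin d) (Fin d × Fin d) ℂ} {c : ℝ}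
    (h : ∀ U ∈ unitaryGroup (Fin d) ℂ, fefAt d ρ U ≤ c) : fef d ρ ≤ c :=
  csSup_le ⟨_, 1, one_mem _, rfl⟩ (by rintro x ⟨U, hU, rfl⟩; exact h U hU)

lemma fefAt_le_fef_of_forall_fefAt_le {ρ : Matrix (Fin d × Fin d) (Fin d × Fin d) ℂ} {c : ℝ}
    (h : ∀ U ∈ unitaryGroup (Fin d) ℂ, fefAt d ρ U ≤ c) {U : Matrix (Fin d) (Fin d) ℂ}
    (hU : U ∈ unitaryGroup (Fin d) ℂ) : fefAt d ρ U ≤ fef d ρ :=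
  le_csSup ⟨c, by rintro x ⟨V, hV, rfl⟩; exact h V hV⟩ ⟨U, hU, rfl⟩

lemma fefAt_outer_le (ψ : Fin d × Fin d → ℂ) {U : Matrix (Fin d) (Fin d) ℂ}
    (hU : U ∈ unitaryGroup (Fin d) ℂ) : fefAt d (outer ψ) U ≤ (∑ p, ‖ψ p‖) ^ 2 / d := by
  rw [fefAt_outer]
  gcongr
  calc ‖∑ p, star (U p.1 p.2) * ψ p‖ ≤ ∑ p, ‖star (U p.1 p.2) * ψ p‖ := norm_sum_le _ _
    _ ≤ ∑ p, ‖ψ p‖ := by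
      gcongr with p
      rw [norm_mul, norm_star]
      exact mul_le_of_le_one_left (norm_nonneg _) (entry_norm_bound_of_unitary hU _ _)

end fefAt

lemma fefAt_half_outer_ket00_add_outer_ket11 (U : Matrix (Fin 2) (Fin 2) ℂ) :
    fefAt 2 ((1 / 2 : ℝ) • (outer ket00 + outer ket11)) U = (‖U 0 0‖ ^ 2 + ‖U 1 1‖ ^ 2) / 4 := by
  rw [fefAt_smul, fefAt_add, fefAt_outer, fefAt_outer]
  simp [ket00, ket11]
  ring

lemma fef_half_outer_ket00_add_outer_ket11 :
    fef 2 ((1 / 2 : ℝ) • (outer ket00 + outer ket11)) = 1 / 2 := by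
  have hle : ∀ U ∈ unitaryGroup (Fin 2) ℂ,
      fefAt 2 ((1 / 2 : ℝ) • (outer ket00 + outer ket11)) U ≤ 1 / 2 := by
    intro U hU
    rw [fefAt_half_outer_ket00_add_outer_ket11]
    have h00 := entry_norm_bound_of_unitary hU 0 0
    have h11 := entry_norm_bound_of_unitary hU 1 1
    nlinarith [norm_nonneg (U 0 0), norm_nonneg (U 1 1)]
  refine le_antisymm (fef_le_of_forall_fefAt_le hle) ?_
  calc (1 / 2 : ℝ) = fefAt 2 ((1 / 2 : ℝ) • (outer ket00 + outer ket11)) 1 := by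
        rw [fefAt_half_outer_ket00_add_outer_ket11]; norm_num
    _ ≤ _ := fefAt_le_fef_of_forall_fefAt_le hle (one_mem _)

lemma fefAt_outer_smul_ket00_add_smul_ket11 (a b : ℂ) (U : Matrix (Fin 2) (Fin 2) ℂ) :
    fefAt 2 (outer (a • ket00 + b • ket11)) U = ‖star (U 0 0) * a + star (U 1 1) * b‖ ^ 2 / 2 := by
  rw [fefAt_outer]
  simp [ket00, ket11, mul_add, Finset.sum_add_distrib]

lemma sum_norm_sq_smul_ket00_add_smul_ket11 (a b : ℂ) :
    ∑ q, ‖(a • ket00 + b • ket11) q‖ ^ 2 = ‖a‖ ^ 2 + ‖b‖ ^ 2 := by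
  simp [Fintype.sum_prod_type, ket00, ket11]

lemma half_add_norm_mul_norm_le_fef (a b : ℂ) (h : ‖a‖ ^ 2 + ‖b‖ ^ 2 = 1) :
    1 / 2 + ‖a‖ * ‖b‖ ≤ fef 2 (outer (a • ket00 + b • ket11)) := by
  -- the phases make both terms of the overlap real and nonnegative
  set U : Matrix (Fin 2) (Fin 2) ℂ := diagonal fun k => Complex.exp (![arg a, arg b] k * I)
  have hU : U ∈ unitaryGroup (Fin 2) ℂ := diagonal_exp_mem_unitaryGroup _
  calc 1 / 2 + ‖a‖ * ‖b‖ = (‖a‖ + ‖b‖) ^ 2 / 2 := by linear_combination (-1 / 2 : ℝ) * h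
    _ = fefAt 2 (outer (a • ket00 + b • ket11)) U := by
      rw [fefAt_outer_smul_ket00_add_smul_ket11]
      simp only [U, diagonal_apply_eq, Matrix.cons_val_zero, Matrix.cons_val_one,
        Complex.star_def, conj_exp_arg_mul_I_mul_self]
      rw [← Complex.ofReal_add, Complex.norm_of_nonneg (by positivity)]
    _ ≤ _ := fefAt_le_fef_of_forall_fefAt_le (fun _ hV => fefAt_outer_le _ hV) hU

lemma half_add_norm_mul_norm_le_fef_outer {ψ : Fin 2 × Fin 2 → ℂ}
    (hψ : ψ = ψ (0, 0) • ket00 + ψ (1, 1) • ket11) (hnorm : ∑ q, ‖ψ q‖ ^ 2 = 1) :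
    1 / 2 + ‖ψ (0, 0)‖ * ‖ψ (1, 1)‖ ≤ fef 2 (outer ψ) := by
  have h := half_add_norm_mul_norm_le_fef (ψ (0, 0)) (ψ (1, 1))
    (by rw [← sum_norm_sq_smul_ket00_add_smul_ket11, ← hψ, hnorm])
  rwa [← hψ] at h

lemma eq_smul_ket00_add_smul_ket11_of_sum_smul_outer_eq {n : ℕ} {p : Fin n → ℝ}
    {ψ : Fin n → Fin 2 × Fin 2 → ℂ} (hp : ∀ i, 0 ≤ p i)
    (hρ : (1 / 2 : ℝ) • (outer ket00 + outer ket11) = ∑ i, p i • outer (ψ i)) {i : Fin n}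
    (hi : p i ≠ 0) : ψ i = ψ i (0, 0) • ket00 + ψ i (1, 1) • ket11 := by
  have h01 : ψ i (0, 1) = 0 := apply_eq_zero_of_sum_smul_outer_apply_eq_zero hp
    (by rw [← hρ]; simp [outer, vecMulVec_apply, ket00, ket11]) hi
  have h10 : ψ i (1, 0) = 0 := apply_eq_zero_of_sum_smul_outer_apply_eq_zero hp
    (by rw [← hρ]; simp [outer, vecMulVec_apply, ket00, ket11]) hi
  funext q
  fin_cases q <;> simp [ket00, ket11, h01, h10]

/-- FEF is not the convex roof of pure-state FEF: for
`ρ = ½(|00⟩⟨00| + |11⟩⟨11|)` one has `F(ρ) = ½`, yet every pure-state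
decomposition satisfies `∑ᵢ pᵢ F(|ψᵢ⟩) ≥ ½`, strictly unless it is the
eigendecomposition. -/
theorem fef_not_convex_roof :
    fef 2 ((1 / 2 : ℝ) • (outer ket00 + outer ket11)) = 1 / 2 ∧
    ∀ (n : ℕ) (p : Fin n → ℝ) (ψ : Fin n → (Fin 2 × Fin 2 → ℂ)),
      (∀ i, 0 ≤ p i) → (∑ i, p i = 1) → (∀ i, ∑ q, ‖ψ i q‖ ^ 2 = 1) →
      ((1 / 2 : ℝ) • (outer ket00 + outer ket11) = ∑ i, p i • outer (ψ i)) →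
      (1 / 2 ≤ ∑ i, p i * fef 2 (outer (ψ i))) ∧
      ((∃ i, p i ≠ 0 ∧ ∀ c : ℂ, ψ i ≠ c • ket00 ∧ ψ i ≠ c • ket11) →
        1 / 2 < ∑ i, p i * fef 2 (outer (ψ i))) := by
  refine ⟨fef_half_outer_ket00_add_outer_ket11, fun n p ψ hp hsum hnorm hρ => ?_⟩
  have hψ : ∀ i, p i ≠ 0 → ψ i = ψ i (0, 0) • ket00 + ψ i (1, 1) • ket11 := fun i hi =>
    eq_smul_ket00_add_smul_ket11_of_sum_smul_outer_eq hp hρ hi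
  have hbound : 1 / 2 + ∑ i, p i * (‖ψ i (0, 0)‖ * ‖ψ i (1, 1)‖)
      ≤ ∑ i, p i * fef 2 (outer (ψ i)) :=
    add_sum_mul_le_sum_mul hp hsum fun i hi =>
      half_add_norm_mul_norm_le_fef_outer (hψ i hi) (hnorm i)
  refine ⟨?_, fun ⟨i, hi, hc⟩ => ?_⟩
  · have : 0 ≤ ∑ i, p i * (‖ψ i (0, 0)‖ * ‖ψ i (1, 1)‖) :=
      sum_nonneg fun j _ => mul_nonneg (hp j) (by positivity)
    linarith
  · have h00 : ψ i (0, 0) ≠ 0 := fun h =>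
      (hc (ψ i (1, 1))).2 ((hψ i hi).trans (by rw [h, zero_smul, zero_add]))
    have h11 : ψ i (1, 1) ≠ 0 := fun h =>
      (hc (ψ i (0, 0))).1 ((hψ i hi).trans (by rw [h, zero_smul, add_zero]))
    have : 0 < ∑ i, p i * (‖ψ i (0, 0)‖ * ‖ψ i (1, 1)‖) :=
      sum_pos' (fun j _ => mul_nonneg (hp j) (by positivity))
        ⟨i, mem_univ i, mul_pos ((hp i).lt_of_ne' hi) (by positivity)⟩
    linarith
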